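/- arXiv:1506.01837 — 6 statements merged into one kernel-verified Lean document; each statement's English description precedes it below -/
import Mathlib

section
/- Let V be a real vector space with an exchange relation ∼ and a positive cone V⁺, and suppose γ0 ∈ V⁺ \ {o} is such that every γ ∈ V⁺ \ {o} has at least one strictly positive γ0-value. Then every γ ∈ V has at least one γ0-value, i.e. for every γ ∈ V there exists b ∈ ℝ with γ ∼ b·γ0. -/
/-- If γ₀ ∈ V⁺ \ {0} is such that every γ ∈ V⁺ \ {0} has a strictly positive
γ₀-value, then every γ ∈ V has at least one γ₀-value. -/
theorem gamma0_value_existence {V : Type*} [AddCommGroup V] [Module ℝ V]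
    (r : V → V → Prop)
    (hrefl : ∀ γ, r γ γ)
    (hsymm : ∀ γ₁ γ₂, r γ₁ γ₂ → r γ₂ γ₁)
    (hadd : ∀ γ₁ γ₂ γ₃ γ₄, r γ₁ γ₂ → r γ₃ γ₄ → r (γ₁ + γ₃) (γ₂ + γ₄))
    (C : Set V)
    (hC1 : ∀ α ∈ C, ∀ β ∈ C, ∀ a b : ℝ, 0 ≤ a → 0 ≤ b → a • α + b • β ∈ C)
    (hC2 : ∀ γ : V, ∃ p ∈ C, ∃ n ∈ C, γ = p - n)
    (γ₀ : V) (hγ₀C : γ₀ ∈ C) (hγ₀ne : γ₀ ≠ 0)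
    (hval : ∀ γ ∈ C, γ ≠ 0 → ∃ b : ℝ, 0 < b ∧ r γ (b • γ₀)) :
    ∀ γ : V, ∃ b : ℝ, r γ (b • γ₀) := by
  -- transitivity from reflexivity, symmetry, additivity
  have htrans : ∀ x y z : V, r x y → r y z → r x z := by
    intro x y z hxy hyz
    have := hadd _ _ _ _ (hadd _ _ _ _ hxy hyz) (hrefl (-y))
    simpa [add_assoc, add_sub_cancel_right, add_comm, add_left_comm] using this
  -- every element of C has a value
  have hCval : ∀ x ∈ C, ∃ a : ℝ, r x (a • γ₀) := by
    intro x hx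
    by_cases hx0 : x = 0
    · exact ⟨0, by simpa [hx0] using hrefl (0 : V)⟩
    · obtain ⟨b, _, hb⟩ := hval x hx hx0
      exact ⟨b, hb⟩
  intro γ
  obtain ⟨p, hp, n, hn, hγ⟩ := hC2 γ
  obtain ⟨a, ha⟩ := hCval p hp
  obtain ⟨c, hc⟩ := hCval n hn
  refine ⟨a - c, ?_⟩
  -- γ + c•γ₀ ∼ γ + n = p ∼ a•γ₀
  have h1 : r (γ + c • γ₀) (γ + n) := hadd _ _ _ _ (hrefl γ) (hsymm _ _ hc)
  have h2 : r (γ + n) (a • γ₀) := by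
    have : γ + n = p := by rw [hγ]; abel
    rw [this]; exact ha
  have h3 : r (γ + c • γ₀) (a • γ₀) := htrans _ _ _ h1 h2
  have h4 := hadd _ _ _ _ h3 (hrefl (-(c • γ₀)))
  have heq : a • γ₀ + -(c • γ₀) = (a - c) • γ₀ := by
    rw [sub_smul]; abel
  simpa [add_assoc, add_neg_cancel, heq] using h4
end

section
/- Let V be a real vector space with an exchange relation ∼ and a positive cone V⁺, and suppose γ0 ∈ V⁺ \ {o} is such that every γ ∈ V⁺ \ {o} has at least one strictly positive γ0-value. Then the non-triviality property NT holds if and only if every γ ∈ V has a uniquely determined γ0-value. Consequently, under NT there exists a uniquely determined functional π_{γ0} : V → ℝ such that γ ∼ π_{γ0}(γ)·γ0 for all γ ∈ V. -/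
/-- NT holds iff every γ ∈ V has a uniquely determined γ₀-value; consequently,
under NT there exists a uniquely determined functional π with γ ∼ π(γ)·γ₀ for all γ. -/
theorem NT_iff_unique_value {V : Type*} [AddCommGroup V] [Module ℝ V]
    (r : V → V → Prop)
    (hrefl : ∀ γ, r γ γ)
    (hsymm : ∀ γ₁ γ₂, r γ₁ γ₂ → r γ₂ γ₁)
    (hadd : ∀ γ₁ γ₂ γ₃ γ₄, r γ₁ γ₂ → r γ₃ γ₄ → r (γ₁ + γ₃) (γ₂ + γ₄))
    (C : Set V)
    (hC1 : ∀ α ∈ C, ∀ β ∈ C, ∀ a b : ℝ, 0 ≤ a → 0 ≤ b → a • α + b • β ∈ C)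
    (hC2 : ∀ γ : V, ∃ p ∈ C, ∃ n ∈ C, γ = p - n)
    (γ₀ : V) (hγ₀C : γ₀ ∈ C) (hγ₀ne : γ₀ ≠ 0)
    (hval : ∀ γ ∈ C, γ ≠ 0 → ∃ b : ℝ, 0 < b ∧ r γ (b • γ₀)) :
    ((¬ ∃ γ ∈ C, γ ≠ 0 ∧ r 0 γ) ↔ ∀ γ : V, ∃! b : ℝ, r γ (b • γ₀)) ∧
    ((¬ ∃ γ ∈ C, γ ≠ 0 ∧ r 0 γ) → ∃! π : V → ℝ, ∀ γ : V, r γ (π γ • γ₀)) := by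
  have htr : ∀ a b x : V, r a b → r (a + x) (b + x) := fun a b x h => hadd _ _ _ _ h (hrefl x)
  have hvalC : ∀ p ∈ C, ∃ b : ℝ, r p (b • γ₀) := by
    intro p hp
    by_cases h : p = 0
    · exact ⟨0, by simp [h, hrefl]⟩
    · obtain ⟨b, _, hb⟩ := hval p hp h; exact ⟨b, hb⟩
  have hex : ∀ γ : V, ∃ b : ℝ, r γ (b • γ₀) := by
    intro γ
    obtain ⟨p, hp, n, hn, rfl⟩ := hC2 γ
    obtain ⟨bp, hbp⟩ := hvalC p hp
    obtain ⟨bn, hbn⟩ := hvalC n hn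
    refine ⟨bp - bn, ?_⟩
    have h1 := hadd _ _ _ _ hbp (hsymm _ _ hbn)
    have h2 := htr _ _ (-(n + bn • γ₀)) h1
    have e1 : p + bn • γ₀ + -(n + bn • γ₀) = p - n := by abel
    have e2 : bp • γ₀ + n + -(n + bn • γ₀) = (bp - bn) • γ₀ := by
      rw [sub_smul]; abel
    rwa [e1, e2] at h2
  have huniq : (¬ ∃ γ ∈ C, γ ≠ 0 ∧ r 0 γ) →
      ∀ (γ : V) (b₁ b₂ : ℝ), r γ (b₁ • γ₀) → r γ (b₂ • γ₀) → b₁ = b₂ := by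
    intro hNT γ b₁ b₂ h1 h2
    by_contra hne
    have key : ∀ c₁ c₂ : ℝ, c₁ < c₂ → r γ (c₁ • γ₀) → r γ (c₂ • γ₀) → False := by
      intro c₁ c₂ hlt k1 k2
      have h3 := hadd _ _ _ _ (hsymm _ _ k1) k2
      have h4 := htr _ _ (-(γ + c₁ • γ₀)) h3
      have e1 : c₁ • γ₀ + γ + -(γ + c₁ • γ₀) = 0 := by abel
      have e2 : γ + c₂ • γ₀ + -(γ + c₁ • γ₀) = (c₂ - c₁) • γ₀ := by rw [sub_smul]; abel
      rw [e1, e2] at h4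
      have hmem : (c₂ - c₁) • γ₀ ∈ C := by
        have := hC1 γ₀ hγ₀C γ₀ hγ₀C (c₂ - c₁) 0 (by linarith) le_rfl
        simpa using this
      exact hNT ⟨(c₂ - c₁) • γ₀, hmem, smul_ne_zero (sub_ne_zero.mpr hlt.ne') hγ₀ne, h4⟩
    rcases lt_or_gt_of_ne hne with h | h
    · exact key _ _ h h1 h2
    · exact key _ _ h h2 h1
  constructor
  · constructor
    · intro hNT γ
      obtain ⟨b, hb⟩ := hex γ
      exact ⟨b, hb, fun b' hb' => huniq hNT γ b' b hb' hb⟩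
    · rintro hU ⟨γ, hγC, hγne, h0γ⟩
      obtain ⟨b, hbpos, hb⟩ := hval γ hγC hγne
      obtain ⟨c, _, hcu⟩ := hU γ
      have hb0 : r γ ((0:ℝ) • γ₀) := by
        rw [zero_smul]; exact hsymm _ _ h0γ
      have := (hcu b hb).trans (hcu 0 hb0).symm
      exact absurd this (ne_of_gt hbpos)
  · intro hNT
    refine ⟨fun γ => (hex γ).choose, fun γ => (hex γ).choose_spec, ?_⟩
    intro π' hπ'
    funext γ
    exact huniq hNT γ _ _ (hπ' γ) (hex γ).choose_spec
end

section
/- Let V be a real vector space with an exchange relation ∼ and a positive cone V⁺, suppose γ0 ∈ V⁺ \ {o} is such that every γ ∈ V⁺ \ {o} has at least one strictly positive γ0-value, and suppose NT holds. Then ∼ is linear: for any γ1, γ2, γ3, γ4 ∈ V with γ1 ∼ γ2 and γ3 ∼ γ4, and any a, b ∈ ℝ, it holds that a·γ1 + b·γ3 ∼ a·γ2 + b·γ4. -/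
/-- Cauchy functional equation with nonnegativity on the right half-line:
an additive map `F : ℝ → ℝ` which is nonnegative on nonnegatives is linear. -/
theorem cauchy_additive_nonneg_linear (F : ℝ → ℝ)
    (hFadd : ∀ x y : ℝ, F (x + y) = F x + F y)
    (hpos : ∀ x : ℝ, 0 ≤ x → 0 ≤ F x) :
    ∀ a : ℝ, F a = a * F 1 := by
  have h0 : F 0 = 0 := by have := hFadd 0 0; simp at this; linarith
  have hmono : ∀ x y : ℝ, x ≤ y → F x ≤ F y := by
    intro x y h
    have h1 : F y = F x + F (y - x) := by
      have := hFadd x (y - x); simpa using this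
    have := hpos (y - x) (by linarith)
    linarith
  have hq : ∀ q : ℚ, F (q : ℝ) = (q : ℝ) * F 1 := by
    intro q
    have := map_rat_smul (AddMonoidHom.mk' F hFadd) q (1 : ℝ)
    simpa [Rat.smul_def] using this
  have hF1 : 0 ≤ F 1 := hpos 1 zero_le_one
  intro a
  rcases eq_or_lt_of_le hF1 with hz | hp
  · -- F 1 = 0 : squeeze between rationals
    have hub : F a ≤ 0 := by
      obtain ⟨q, hq1⟩ := exists_rat_gt a
      have := hmono a q hq1.le
      rw [hq q, ← hz] at this; linarith
    have hlb : 0 ≤ F a := by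
      obtain ⟨q, hq1⟩ := exists_rat_lt a
      have := hmono (q : ℝ) a hq1.le
      rw [hq q, ← hz] at this; linarith
    rw [← hz]; linarith
  · apply le_antisymm
    · by_contra hcon
      push_neg at hcon
      have ha : a < F a / F 1 := (lt_div_iff₀ hp).2 (by linarith)
      obtain ⟨q, hq1, hq2⟩ := exists_rat_btwn ha
      have h1 : F a ≤ F q := hmono a q hq1.le
      have h2 : (q : ℝ) * F 1 < F a := by
        have := (lt_div_iff₀ hp).1 hq2
        linarith
      rw [hq q] at h1; linarith
    · by_contra hcon
      push_neg at hcon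
      have ha : F a / F 1 < a := (div_lt_iff₀ hp).2 (by linarith)
      obtain ⟨q, hq1, hq2⟩ := exists_rat_btwn ha
      have h1 : F q ≤ F a := hmono (q : ℝ) a hq2.le
      have h2 : F a < (q : ℝ) * F 1 := by
        have := (div_lt_iff₀ hp).1 hq1
        linarith
      rw [hq q] at h1; linarith

/-- Under NT, the exchange relation ∼ is linear: γ₁ ∼ γ₂ and γ₃ ∼ γ₄ imply
a·γ₁ + b·γ₃ ∼ a·γ₂ + b·γ₄ for all a, b ∈ ℝ. -/
theorem linearity_under_NT {V : Type*} [AddCommGroup V] [Module ℝ V]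
    (r : V → V → Prop)
    (hrefl : ∀ γ, r γ γ)
    (hsymm : ∀ γ₁ γ₂, r γ₁ γ₂ → r γ₂ γ₁)
    (hadd : ∀ γ₁ γ₂ γ₃ γ₄, r γ₁ γ₂ → r γ₃ γ₄ → r (γ₁ + γ₃) (γ₂ + γ₄))
    (C : Set V)
    (hC1 : ∀ α ∈ C, ∀ β ∈ C, ∀ a b : ℝ, 0 ≤ a → 0 ≤ b → a • α + b • β ∈ C)
    (hC2 : ∀ γ : V, ∃ p ∈ C, ∃ n ∈ C, γ = p - n)
    (γ₀ : V) (hγ₀C : γ₀ ∈ C) (hγ₀ne : γ₀ ≠ 0)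
    (hval : ∀ γ ∈ C, γ ≠ 0 → ∃ b : ℝ, 0 < b ∧ r γ (b • γ₀))
    (hNT : ¬ ∃ γ ∈ C, γ ≠ 0 ∧ r 0 γ) :
    ∀ γ₁ γ₂ γ₃ γ₄ : V, r γ₁ γ₂ → r γ₃ γ₄ → ∀ a b : ℝ,
      r (a • γ₁ + b • γ₃) (a • γ₂ + b • γ₄) := by
  -- S : the set of elements related to 0
  set S : V → Prop := fun δ => r δ 0 with hS
  have s_add : ∀ x y, S x → S y → S (x + y) := by
    intro x y hx hy
    have := hadd x 0 y 0 hx hy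
    simpa using this
  have s_neg : ∀ x, S x → S (-x) := by
    intro x hx
    have := hadd 0 x (-x) (-x) (hsymm _ _ hx) (hrefl _)
    simpa using this
  have s_sub : ∀ x y, S x → S y → S (x - y) := by
    intro x y hx hy
    have := s_add x (-y) hx (s_neg y hy)
    simpa [sub_eq_add_neg] using this
  have rel_of_s : ∀ x y : V, S (x - y) → r x y := by
    intro x y h
    have := hadd (x - y) 0 y y h (hrefl y)
    simpa using this
  have s_of_rel : ∀ x y : V, r x y → S (x - y) := by
    intro x y h
    have := hadd x y (-y) (-y) h (hrefl _)
    simpa [hS, sub_eq_add_neg] using this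
  -- Lemma A: S (c • γ₀) → c = 0
  have lemA : ∀ c : ℝ, S (c • γ₀) → c = 0 := by
    intro c hc
    by_contra hne
    rcases lt_or_gt_of_ne hne with hneg | hpos'
    · have h2 : S ((-c) • γ₀) := by
        have := s_neg _ hc
        simpa [neg_smul] using this
      apply hNT
      refine ⟨(-c) • γ₀, ?_, ?_, hsymm _ _ h2⟩
      · have := hC1 γ₀ hγ₀C γ₀ hγ₀C (-c) 0 (by linarith) le_rfl
        simpa using this
      · exact smul_ne_zero (by linarith) hγ₀ne
    · apply hNT
      refine ⟨c • γ₀, ?_, ?_, hsymm _ _ hc⟩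
      · have := hC1 γ₀ hγ₀C γ₀ hγ₀C c 0 (by linarith) le_rfl
        simpa using this
      · exact smul_ne_zero (ne_of_gt hpos') hγ₀ne
  -- values: for p ∈ C, existence and uniqueness of b with S (p - b • γ₀)
  have val_unique : ∀ (x : V) (b b' : ℝ), S (x - b • γ₀) → S (x - b' • γ₀) → b = b' := by
    intro x b b' h1 h2
    have h3 : S ((b' - b) • γ₀) := by
      have := s_sub _ _ h1 h2
      have heq : (x - b • γ₀) - (x - b' • γ₀) = (b' - b) • γ₀ := by
        rw [sub_smul]; abel
      rwa [heq] at this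
    have := lemA _ h3
    linarith
  have val_exists : ∀ p ∈ C, ∃ b : ℝ, 0 ≤ b ∧ S (p - b • γ₀) := by
    intro p hp
    by_cases hp0 : p = 0
    · exact ⟨0, le_rfl, by simpa [hp0] using hrefl (0 : V)⟩
    · obtain ⟨b, hb, hrb⟩ := hval p hp hp0
      exact ⟨b, hb.le, s_of_rel _ _ hrb⟩
  -- Key scaling lemma: if p ∈ C and S (p - b•γ₀) then S (a•p - (a*b)•γ₀) for all a
  have key : ∀ p ∈ C, ∀ b : ℝ, S (p - b • γ₀) → ∀ a : ℝ, S (a • p - (a * b) • γ₀) := by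
    intro p hp b hb a
    -- the "value function" F along the ray through p
    have exval : ∀ t : ℝ, ∃ c : ℝ, S (t • p - c • γ₀) := by
      intro t
      rcases le_total 0 t with ht | ht
      · have htp : t • p ∈ C := by
          have := hC1 p hp p hp t 0 ht le_rfl
          simpa using this
        obtain ⟨c, _, hc⟩ := val_exists _ htp
        exact ⟨c, hc⟩
      · have htp : (-t) • p ∈ C := by
          have := hC1 p hp p hp (-t) 0 (by linarith) le_rfl
          simpa using this
        obtain ⟨c, _, hc⟩ := val_exists _ htp
        refine ⟨-c, ?_⟩
        have := s_neg _ hc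
        have heq : -((-t) • p - c • γ₀) = t • p - (-c) • γ₀ := by
          simp [neg_smul]; abel
        rwa [heq] at this
    choose F hF using exval
    have hFadd : ∀ x y : ℝ, F (x + y) = F x + F y := by
      intro x y
      have h1 := s_add _ _ (hF x) (hF y)
      have heq : (x • p - F x • γ₀) + (y • p - F y • γ₀)
          = (x + y) • p - (F x + F y) • γ₀ := by
        rw [add_smul, add_smul]; abel
      rw [heq] at h1
      exact val_unique _ _ _ (hF (x + y)) h1
    have hFpos : ∀ t : ℝ, 0 ≤ t → 0 ≤ F t := by
      intro t ht
      have htp : t • p ∈ C := by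
        have := hC1 p hp p hp t 0 ht le_rfl
        simpa using this
      obtain ⟨c, hc0, hc⟩ := val_exists _ htp
      have := val_unique _ _ _ (hF t) hc
      linarith
    have hFlin := cauchy_additive_nonneg_linear F hFadd hFpos
    have hF1 : F 1 = b := by
      apply val_unique p (F 1) b _ hb
      have := hF 1
      simpa using this
    have hFa : F a = a * b := by rw [hFlin a, hF1]
    rw [← hFa]
    exact hF a
  -- S is closed under real scalar multiplication
  have s_smul : ∀ δ : V, S δ → ∀ a : ℝ, S (a • δ) := by
    intro δ hδ a
    obtain ⟨p, hp, n, hn, hpn⟩ := hC2 δ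
    obtain ⟨bp, _, hbp⟩ := val_exists p hp
    obtain ⟨bn, _, hbn⟩ := val_exists n hn
    -- bp = bn
    have hdiff : S ((bn - bp) • γ₀) := by
      have h1 := s_sub _ _ (s_sub _ _ hbp hbn) (hpn ▸ hδ)
      have heq : ((p - bp • γ₀) - (n - bn • γ₀)) - (p - n) = (bn - bp) • γ₀ := by
        rw [sub_smul]; abel
      rwa [heq] at h1
    have hbb : bp = bn := by have := lemA _ hdiff; linarith
    have h1 := key p hp bp hbp a
    have h2 := key n hn bn hbn a
    have h3 := s_sub _ _ h1 h2
    have heq : (a • p - (a * bp) • γ₀) - (a • n - (a * bn) • γ₀) = a • δ := by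
      rw [hpn, hbb, smul_sub]; abel
    rwa [heq] at h3
  -- assemble the conclusion
  intro γ₁ γ₂ γ₃ γ₄ h12 h34 a b
  apply rel_of_s
  have h1 := s_smul _ (s_of_rel _ _ h12) a
  have h2 := s_smul _ (s_of_rel _ _ h34) b
  have h3 := s_add _ _ h1 h2
  have heq : a • (γ₁ - γ₂) + b • (γ₃ - γ₄)
      = (a • γ₁ + b • γ₃) - (a • γ₂ + b • γ₄) := by
    rw [smul_sub, smul_sub]; abel
  rwa [heq] at h3
end

section
/- In a market (M_b, ∼) of deterministic cash flows, no-arbitrage (NA) holds if and only if the Law of One Price holds, i.e. if and only if every γ ∈ M_b has exactly one spot price. Consequently, in an arbitrage-free market there exists a uniquely determined functional π : M_b → ℝ such that γ ∼ π(γ)·δ0 for all γ ∈ M_b. -/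
open MeasureTheory
open scoped NNReal

/-- The unit zero-coupon bond with maturity `t`: the Dirac measure at `t`,
as a finite signed Borel measure on `[0,∞)` (modeled as `ℝ≥0`). -/
noncomputable def uzcb (t : ℝ≥0) : SignedMeasure ℝ≥0 :=
  (MeasureTheory.Measure.dirac t).toSignedMeasure

/-- A market of deterministic cash flows: a reflexive, symmetric, additive relation on the
finite signed Borel measures on `[0,∞)` such that every nonzero nonnegative cash flow has at
least one strictly positive spot price. -/
def IsMarket (r : SignedMeasure ℝ≥0 → SignedMeasure ℝ≥0 → Prop) : Prop :=
  (∀ γ, r γ γ) ∧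
  (∀ γ₁ γ₂, r γ₁ γ₂ → r γ₂ γ₁) ∧
  (∀ γ₁ γ₂ γ₃ γ₄, r γ₁ γ₂ → r γ₃ γ₄ → r (γ₁ + γ₃) (γ₂ + γ₄)) ∧
  (∀ γ : SignedMeasure ℝ≥0, 0 ≤ γ → γ ≠ 0 → ∃ b : ℝ, 0 < b ∧ r γ (b • uzcb 0))

/-- No-arbitrage: no nonzero nonnegative cash flow is exchangeable for the null cash flow. -/
def NoArb (r : SignedMeasure ℝ≥0 → SignedMeasure ℝ≥0 → Prop) : Prop :=
  ¬ ∃ γ : SignedMeasure ℝ≥0, 0 ≤ γ ∧ γ ≠ 0 ∧ r 0 γ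

/-!
The first three market axioms make `∼` an additive congruence, so spot prices add up and
`γ ∼ γ'` iff `γ - γ' ∼ o`. Every cash flow is the difference of two finite measures (its Jordan
decomposition), each of which has a spot price, so spot prices always exist. Two spot prices
`b`, `c` of the same `γ` give `o ∼ (b - c)·δ₀` and `o ∼ (c - b)·δ₀`, one of which is an
arbitrage unless `b = c`. Conversely, an arbitrage `o ∼ γ` together with `γ ∼ b·δ₀`, `b > 0`,
gives `o` the two spot prices `0` and `b`.
-/

theorem existsUnique_forall_of_forall_existsUnique {α β : Sort*} {p : α → β → Prop}
    (h : ∀ a, ∃! b, p a b) : ∃! f : α → β, ∀ a, p a (f a) :=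
  ⟨fun a => (h a).choose, fun a => (h a).choose_spec.1,
    fun _ hf => funext fun a => (h a).unique (hf a) (h a).choose_spec.1⟩

/-- Transitivity is automatic: from `x ∼ y`, `-y ∼ -y` and `y ∼ z` we get `x - y + y ∼ y - y + z`. -/
def AddCon.ofReflSymm {M : Type*} [AddGroup M] (r : M → M → Prop) (refl : ∀ x, r x x)
    (symm : ∀ {x y}, r x y → r y x) (add : ∀ {w x y z}, r w x → r y z → r (w + y) (x + z)) :
    AddCon M where
  r := r
  iseqv := ⟨refl, symm, fun {_ y _} hxy hyz => by
    simpa [add_assoc] using add (add hxy (refl (-y))) hyz⟩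
  add' := add

theorem MeasureTheory.SignedMeasure.nonneg_smul {α : Type*} [MeasurableSpace α]
    {s : SignedMeasure α} (hs : 0 ≤ s) {a : ℝ} (ha : 0 ≤ a) : 0 ≤ a • s := by
  rw [VectorMeasure.le_iff] at hs ⊢
  intro i hi
  simpa using mul_nonneg ha (by simpa using hs i hi)

theorem uzcb_nonneg (t : ℝ≥0) : 0 ≤ uzcb t :=
  Measure.zero_le_toSignedMeasure _

theorem uzcb_apply_univ (t : ℝ≥0) : uzcb t Set.univ = 1 := by
  simp [uzcb, Measure.toSignedMeasure_apply_measurable MeasurableSet.univ]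

theorem smul_uzcb_ne_zero {a : ℝ} (ha : a ≠ 0) (t : ℝ≥0) : a • uzcb t ≠ 0 := fun h => by
  simpa [uzcb_apply_univ, ha] using congrArg (· Set.univ) h

/- `a • uzcb t` is formed with `VectorMeasure`'s own scalar action, which is not reducibly the
one of `Module ℝ (SignedMeasure _)`, so `rw [sub_smul]` and `rw [neg_smul]` do not fire on it. -/
theorem sub_smul_uzcb (b c : ℝ) (t : ℝ≥0) : (b - c) • uzcb t = b • uzcb t - c • uzcb t :=
  sub_smul b c (uzcb t)

theorem neg_smul_uzcb (a : ℝ) (t : ℝ≥0) : -a • uzcb t = -(a • uzcb t) :=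
  neg_smul a (uzcb t)

namespace IsMarket

variable {r : SignedMeasure ℝ≥0 → SignedMeasure ℝ≥0 → Prop}

def toAddCon (hM : IsMarket r) : AddCon (SignedMeasure ℝ≥0) :=
  AddCon.ofReflSymm r hM.1 (hM.2.1 _ _) (hM.2.2.1 _ _ _ _)

theorem trans (hM : IsMarket r) {x y z : SignedMeasure ℝ≥0} : r x y → r y z → r x z :=
  hM.toAddCon.trans

theorem neg (hM : IsMarket r) {x y : SignedMeasure ℝ≥0} : r x y → r (-x) (-y) :=
  hM.toAddCon.neg

theorem sub (hM : IsMarket r) {w x y z : SignedMeasure ℝ≥0} :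
    r w x → r y z → r (w - y) (x - z) :=
  hM.toAddCon.sub

theorem exists_spot_price_of_measure (hM : IsMarket r) (μ : Measure ℝ≥0) [IsFiniteMeasure μ] :
    ∃ b : ℝ, r μ.toSignedMeasure (b • uzcb 0) := by
  rcases eq_or_ne μ 0 with rfl | hμ
  · exact ⟨0, by simpa using hM.1 0⟩
  · have hne : μ.toSignedMeasure ≠ 0 := by
      rwa [← Measure.toSignedMeasure_zero, Ne, Measure.toSignedMeasure_eq_toSignedMeasure_iff]
    obtain ⟨b, -, hb⟩ := hM.2.2.2 _ (Measure.zero_le_toSignedMeasure μ) hne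
    exact ⟨b, hb⟩

theorem exists_spot_price (hM : IsMarket r) (γ : SignedMeasure ℝ≥0) :
    ∃ b : ℝ, r γ (b • uzcb 0) := by
  obtain ⟨bp, hbp⟩ := hM.exists_spot_price_of_measure γ.toJordanDecomposition.posPart
  obtain ⟨bn, hbn⟩ := hM.exists_spot_price_of_measure γ.toJordanDecomposition.negPart
  refine ⟨bp - bn, ?_⟩
  have h := hM.sub hbp hbn
  rwa [← JordanDecomposition.toSignedMeasure, γ.toSignedMeasure_toJordanDecomposition,
    ← sub_smul_uzcb] at h

theorem eq_zero_of_rel_zero_smul (hM : IsMarket r) (hNA : NoArb r) {a : ℝ}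
    (h : r 0 (a • uzcb 0)) : a = 0 := by
  by_contra ha
  have habs : r 0 (|a| • uzcb 0) := by
    rcases abs_choice a with habs | habs <;> rw [habs]
    · exact h
    · simpa only [neg_zero, neg_smul_uzcb] using hM.neg h
  exact hNA ⟨_, SignedMeasure.nonneg_smul (uzcb_nonneg 0) (abs_nonneg a),
    smul_uzcb_ne_zero (abs_ne_zero.mpr ha) 0, habs⟩

theorem spot_price_unique (hM : IsMarket r) (hNA : NoArb r) {γ : SignedMeasure ℝ≥0} {b c : ℝ}
    (hb : r γ (b • uzcb 0)) (hc : r γ (c • uzcb 0)) : b = c := by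
  have h := hM.sub hb hc
  rw [sub_self, ← sub_smul_uzcb] at h
  exact sub_eq_zero.mp (hM.eq_zero_of_rel_zero_smul hNA h)

theorem noArb_of_spot_price_unique (hM : IsMarket r)
    (h : ∀ γ (b c : ℝ), r γ (b • uzcb 0) → r γ (c • uzcb 0) → b = c) : NoArb r := by
  rintro ⟨γ, hγ, hγ0, harb⟩
  obtain ⟨b, hb, hγb⟩ := hM.2.2.2 γ hγ hγ0
  have h0 : r 0 ((0 : ℝ) • uzcb 0) := by simpa using hM.1 0
  exact hb.ne (h 0 0 b h0 (hM.trans harb hγb))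

end IsMarket

/-- NA holds iff the Law of One Price holds (every cash flow has exactly one
spot price); consequently, under NA there is a uniquely determined price functional π
with γ ∼ π(γ)·δ₀ for all γ. -/
theorem NA_iff_LOP (r : SignedMeasure ℝ≥0 → SignedMeasure ℝ≥0 → Prop)
    (hM : IsMarket r) :
    (NoArb r ↔ ∀ γ : SignedMeasure ℝ≥0, ∃! b : ℝ, r γ (b • uzcb 0)) ∧
    (NoArb r → ∃! π : SignedMeasure ℝ≥0 → ℝ,
      ∀ γ : SignedMeasure ℝ≥0, r γ (π γ • uzcb 0)) := by
  have hLOP : NoArb r ↔ ∀ γ : SignedMeasure ℝ≥0, ∃! b : ℝ, r γ (b • uzcb 0) :=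
    ⟨fun hNA γ => existsUnique_of_exists_of_unique (hM.exists_spot_price γ)
        fun _ _ => hM.spot_price_unique hNA,
      fun h => hM.noArb_of_spot_price_unique fun γ _ _ => (h γ).unique⟩
  exact ⟨hLOP, fun hNA => existsUnique_forall_of_forall_existsUnique (hLOP.mp hNA)⟩
end

section
/- Let (M_b, ∼) be an arbitrage-free market with NA price π and unit zero-coupon bond prices P_t = π(δ_t), and assume: (A1) t ↦ P_t is continuous, bounded and strictly positive on [0,∞); (A2) for every γ ∈ M_b⁺ and all 0 ≤ s < t there exists b with min{P_r : r ∈ [s,t]} ≤ b ≤ max{P_r : r ∈ [s,t]} such that π(γ_{(s,t]}) = b·γ((s,t]), where γ_{(s,t]} is the restriction of γ to (s,t]. Then for every T > 0 and every γ ∈ M_b whose total variation is supported in [0,T], the NA price is π(γ) = ∫_0^∞ P_t dγ(t), the integral being ∫_0^∞ P_t dγ⁺(t) − ∫_0^∞ P_t dγ⁻(t) for the Jordan decomposition γ = γ⁺ − γ⁻. -/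
open MeasureTheory
open scoped NNReal

/-- Integral of a function against a finite signed Borel measure, defined via the Jordan
decomposition γ = γ⁺ - γ⁻ as ∫ f dγ⁺ - ∫ f dγ⁻. -/
noncomputable def sInt (f : ℝ≥0 → ℝ) (γ : SignedMeasure ℝ≥0) : ℝ :=
  (∫ t, f t ∂γ.toJordanDecomposition.posPart) -
    ∫ t, f t ∂γ.toJordanDecomposition.negPart

/-!
Under no-arbitrage, prices are unique, so the price functional `π` is additive and
`π (c • δ₀) = c`. Split a nonnegative cash flow `μ` carried by `[0, T]` into its atom at `0`,
priced at `μ {0} = μ {0} * P 0`, and its part on `(0, T]`. Cut `(0, T]` into intervals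
`(tᵢ, tᵢ₊₁]`: by (A2) the price of each piece is `bᵢ μ (tᵢ, tᵢ₊₁]` with `bᵢ` between the extrema
of `P` on `[tᵢ, tᵢ₊₁]`, so it differs from `∫_(tᵢ, tᵢ₊₁] P dμ` by at most the oscillation of `P`
there times the mass. Uniform continuity of `P` on `[0, T]` makes the total error arbitrarily
small, and a signed cash flow is handled through its Jordan decomposition.
-/

open Set

section NoArbitragePrice

variable {r : SignedMeasure ℝ≥0 → SignedMeasure ℝ≥0 → Prop} {π : SignedMeasure ℝ≥0 → ℝ}

lemma smul_uzcb_nonneg {c : ℝ} (hc : 0 ≤ c) (t : ℝ≥0) : 0 ≤ c • uzcb t := by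
  rw [VectorMeasure.le_iff]
  intro A hA
  simpa [uzcb, Measure.toSignedMeasure_apply_measurable hA] using mul_nonneg hc measureReal_nonneg

lemma smul_uzcb_ne_zero_s10 {c : ℝ} (hc : c ≠ 0) (t : ℝ≥0) : c • uzcb t ≠ 0 := by
  intro h
  have := congrArg (fun γ : SignedMeasure ℝ≥0 => γ univ) h
  simp [uzcb, Measure.toSignedMeasure_apply_measurable MeasurableSet.univ] at this
  exact hc this

lemma not_rel_smul_uzcb_zero_of_lt (hM : IsMarket r) (hNA : NoArb r) {b c : ℝ} (hbc : b < c) :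
    ¬ r (b • uzcb 0) (c • uzcb 0) := by
  intro h
  have h' := hM.2.2.1 _ _ _ _ (hM.1 ((-b) • uzcb 0)) h
  rw [← add_smul, ← add_smul, neg_add_cancel, zero_smul, neg_add_eq_sub] at h'
  exact hNA ⟨_, smul_uzcb_nonneg (sub_nonneg.2 hbc.le) 0,
    smul_uzcb_ne_zero_s10 (sub_ne_zero.2 hbc.ne') 0, h'⟩

lemma eq_of_rel_smul_uzcb_zero (hM : IsMarket r) (hNA : NoArb r) {γ : SignedMeasure ℝ≥0}
    {b c : ℝ} (hb : r γ (b • uzcb 0)) (hc : r γ (c • uzcb 0)) : b = c := by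
  have h := hM.2.2.1 _ _ _ _ (hM.2.2.1 _ _ _ _ (hM.2.1 _ _ hb) hc) (hM.1 (-γ))
  rw [add_neg_cancel_right, add_comm γ, add_neg_cancel_right] at h
  rcases lt_trichotomy b c with hlt | heq | hlt
  · exact absurd h (not_rel_smul_uzcb_zero_of_lt hM hNA hlt)
  · exact heq
  · exact absurd (hM.2.1 _ _ h) (not_rel_smul_uzcb_zero_of_lt hM hNA hlt)

lemma price_smul_uzcb_zero (hM : IsMarket r) (hNA : NoArb r) (hπ : ∀ γ, r γ (π γ • uzcb 0))
    (c : ℝ) : π (c • uzcb 0) = c :=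
  eq_of_rel_smul_uzcb_zero hM hNA (hπ _) (hM.1 _)

lemma price_add (hM : IsMarket r) (hNA : NoArb r) (hπ : ∀ γ, r γ (π γ • uzcb 0))
    (γ₁ γ₂ : SignedMeasure ℝ≥0) : π (γ₁ + γ₂) = π γ₁ + π γ₂ := by
  refine eq_of_rel_smul_uzcb_zero hM hNA (hπ _) ?_
  rw [add_smul]
  exact hM.2.2.1 _ _ _ _ (hπ γ₁) (hπ γ₂)

end NoArbitragePrice

lemma abs_sub_le_of_mem_Icc_sInf_sSup {α : Type*} {f : α → ℝ} {s : Set α} {ε b : ℝ}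
    (hosc : ∀ x ∈ s, ∀ y ∈ s, |f x - f y| ≤ ε)
    (hb : b ∈ Icc (sInf (f '' s)) (sSup (f '' s))) {x : α} (hx : x ∈ s) : |b - f x| ≤ ε := by
  have hne : (f '' s).Nonempty := ⟨f x, mem_image_of_mem f hx⟩
  have hinf : f x - ε ≤ sInf (f '' s) :=
    le_csInf hne (forall_mem_image.2 fun y hy => by linarith [(abs_le.1 (hosc x hx y hy)).2])
  have hsup : sSup (f '' s) ≤ f x + ε :=
    csSup_le hne (forall_mem_image.2 fun y hy => by linarith [(abs_le.1 (hosc y hy x hx)).2])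
  rw [abs_le]
  constructor <;> linarith [hb.1, hb.2]

lemma abs_mul_measureReal_sub_setIntegral_le {α : Type*} [MeasurableSpace α] {μ : Measure α}
    {s : Set α} (hs : μ s ≠ ⊤) {f : α → ℝ} (hf : IntegrableOn f s μ) {b ε : ℝ}
    (hb : ∀ x ∈ s, |b - f x| ≤ ε) : |b * μ.real s - ∫ x in s, f x ∂μ| ≤ ε * μ.real s := by
  have hconst : b * μ.real s = ∫ _ in s, b ∂μ := by
    rw [setIntegral_const, smul_eq_mul, mul_comm]
  rw [hconst, ← integral_sub (integrableOn_const hs).integrable hf.integrable, ← Real.norm_eq_abs]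
  exact norm_setIntegral_le_of_norm_le_const hs.lt_top
    fun x hx => (Real.norm_eq_abs _).trans_le (hb x hx)

lemma exists_partition_mesh_le {T : ℝ≥0} (hT : 0 < T) {δ : ℝ} (hδ : 0 < δ) :
    ∃ (n : ℕ) (t : ℕ → ℝ≥0), StrictMono t ∧ t 0 = 0 ∧ t n = T ∧
      ∀ i, (t (i + 1) : ℝ) - t i ≤ δ := by
  obtain ⟨n, hn⟩ := exists_nat_gt ((T : ℝ) / δ)
  have hn0 : (0 : ℝ) < n := lt_trans (by positivity) hn
  refine ⟨n, fun i => T / n * i, fun i j hij => ?_, by simp, ?_, fun i => ?_⟩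
  · exact mul_lt_mul_of_pos_left (Nat.cast_lt.2 hij) (div_pos hT (by exact_mod_cast hn0))
  · exact div_mul_cancel₀ T (by exact_mod_cast hn0.ne')
  · push_cast
    rw [← mul_sub, add_sub_cancel_left, mul_one, div_le_iff₀ hn0]
    rw [div_lt_iff₀ hδ] at hn
    linarith

lemma MeasureTheory.Measure.toSignedMeasure_nonneg {α : Type*} [MeasurableSpace α]
    (μ : Measure α) [IsFiniteMeasure μ] : 0 ≤ μ.toSignedMeasure := by
  rw [VectorMeasure.le_iff]
  intro A hA
  simp [Measure.toSignedMeasure_apply_measurable hA]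

lemma restrict_singleton_eq_smul_uzcb (γ : SignedMeasure ℝ≥0) (t : ℝ≥0) :
    γ.restrict {t} = γ {t} • uzcb t := by
  ext A hA
  by_cases htA : t ∈ A <;>
    simp [uzcb, Measure.toSignedMeasure_apply_measurable hA, measureReal_def, hA, htA]

/-- Assumption (A2) of the theorem for the single cash flow `γ`. -/
def AverageValueRequirement (π : SignedMeasure ℝ≥0 → ℝ) (P : ℝ≥0 → ℝ)
    (γ : SignedMeasure ℝ≥0) : Prop :=
  ∀ s t : ℝ≥0, s < t → ∃ b : ℝ, sInf (P '' Icc s t) ≤ b ∧ b ≤ sSup (P '' Icc s t) ∧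
    π (γ.restrict (Ioc s t)) = b * γ (Ioc s t)

section AdditivePrice

variable {π : SignedMeasure ℝ≥0 →+ ℝ} {P : ℝ≥0 → ℝ} {μ : Measure ℝ≥0} [IsFiniteMeasure μ]

lemma abs_price_restrict_Ioc_sub_setIntegral_le (hP : Continuous P)
    (havg : AverageValueRequirement π P μ.toSignedMeasure) {t : ℕ → ℝ≥0} (ht : StrictMono t)
    {ε : ℝ} (n : ℕ)
    (hosc : ∀ i < n, ∀ x ∈ Icc (t i) (t (i + 1)), ∀ y ∈ Icc (t i) (t (i + 1)), |P x - P y| ≤ ε) :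
    |π (μ.toSignedMeasure.restrict (Ioc (t 0) (t n))) - ∫ x in Ioc (t 0) (t n), P x ∂μ| ≤
      ε * μ.real (Ioc (t 0) (t n)) := by
  have hint (a b : ℝ≥0) : IntegrableOn P (Ioc a b) μ :=
    hP.integrableOn_Icc.mono_set Ioc_subset_Icc_self
  induction n with
  | zero => simp
  | succ n ih =>
    have hunion :=
      (Ioc_union_Ioc_eq_Ioc (ht.monotone n.zero_le) (ht.monotone (n.le_add_right 1))).symm
    have hdisj : Disjoint (Ioc (t 0) (t n)) (Ioc (t n) (t (n + 1))) :=
      Ioc_disjoint_Ioc_of_le le_rfl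
    obtain ⟨b, hb₁, hb₂, hb⟩ := havg _ _ (ht n.lt_add_one)
    rw [Measure.toSignedMeasure_apply_measurable measurableSet_Ioc] at hb
    have hlast := abs_mul_measureReal_sub_setIntegral_le (measure_ne_top μ _) (hint _ _)
      fun x hx => abs_sub_le_of_mem_Icc_sInf_sSup (hosc n n.lt_add_one) ⟨hb₁, hb₂⟩
        (Ioc_subset_Icc_self hx)
    have hinit := ih fun i hi => hosc i (hi.trans n.lt_add_one)
    rw [hunion, VectorMeasure.restrict_union hdisj measurableSet_Ioc measurableSet_Ioc, map_add,
      setIntegral_union hdisj measurableSet_Ioc (hint _ _) (hint _ _),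
      measureReal_union hdisj measurableSet_Ioc, hb, mul_add, add_sub_add_comm]
    exact (abs_add_le _ _).trans (add_le_add hinit hlast)

lemma price_restrict_Ioc_zero_eq_setIntegral (hP : Continuous P)
    (havg : AverageValueRequirement π P μ.toSignedMeasure) {T : ℝ≥0} (hT : 0 < T) :
    π (μ.toSignedMeasure.restrict (Ioc 0 T)) = ∫ x in Ioc 0 T, P x ∂μ := by
  set C := μ.real (Ioc 0 T)
  refine eq_of_forall_dist_le fun ε hε => ?_
  obtain ⟨δ, hδ, hunif⟩ := Metric.uniformContinuousOn_iff_le.1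
    (isCompact_Icc.uniformContinuousOn_of_continuous hP.continuousOn) (ε / (C + 1))
    (by positivity)
  obtain ⟨n, t, ht, ht0, htn, hmesh⟩ := exists_partition_mesh_le hT hδ
  have hosc : ∀ i < n, ∀ x ∈ Icc (t i) (t (i + 1)), ∀ y ∈ Icc (t i) (t (i + 1)),
      |P x - P y| ≤ ε / (C + 1) := by
    intro i hi x hx y hy
    have hsub : Icc (t i) (t (i + 1)) ⊆ Icc 0 T :=
      Icc_subset_Icc zero_le (htn ▸ ht.monotone hi)
    have hxy : dist x y ≤ δ := by
      rw [NNReal.dist_eq]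
      exact (Real.dist_le_of_mem_Icc ⟨hx.1, hx.2⟩ ⟨hy.1, hy.2⟩).trans (hmesh i)
    rw [← Real.dist_eq]
    exact hunif x (hsub hx) y (hsub hy) hxy
  have h := abs_price_restrict_Ioc_sub_setIntegral_le hP havg ht n hosc
  rw [ht0, htn] at h
  rw [Real.dist_eq]
  calc _ ≤ ε / (C + 1) * C := h
    _ ≤ ε := by
      rw [div_mul_eq_mul_div, div_le_iff₀ (by positivity)]
      nlinarith

lemma price_eq_integral_of_measure_Ioi_eq_zero (hsmul : ∀ c, π (c • uzcb 0) = c)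
    (hP0 : P 0 = 1) (hP : Continuous P) (havg : AverageValueRequirement π P μ.toSignedMeasure)
    {T : ℝ≥0} (hT : 0 < T) (hsupp : μ (Ioi T) = 0) :
    π μ.toSignedMeasure = ∫ x, P x ∂μ := by
  have hIic : Iic T = {0} ∪ Ioc 0 T := by
    ext x
    rcases eq_or_ne x 0 with rfl | hx <;> simp [*]
  have hdisj : Disjoint {0} (Ioc 0 T) := by simp
  have hμ : μ.restrict (Iic T) = μ := Measure.restrict_eq_self_of_ae_mem
    ((measure_eq_zero_iff_ae_notMem.1 hsupp).mono fun _ hx => mem_Iic.2 (not_lt.1 hx))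
  have hint : IntegrableOn P (Icc 0 T) μ := hP.integrableOn_Icc
  have hprice : π μ.toSignedMeasure = μ.real {0} + π (μ.toSignedMeasure.restrict (Ioc 0 T)) :=
    calc π μ.toSignedMeasure = π (μ.restrict (Iic T)).toSignedMeasure := by
          rw [Measure.toSignedMeasure_congr hμ]
      _ = π (μ.toSignedMeasure.restrict {0} + μ.toSignedMeasure.restrict (Ioc 0 T)) := by
          rw [← VectorMeasure.restrict_toSignedMeasure measurableSet_Iic, hIic,
            VectorMeasure.restrict_union hdisj (measurableSet_singleton 0) measurableSet_Ioc]
      _ = _ := by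
          rw [map_add, restrict_singleton_eq_smul_uzcb, hsmul,
            Measure.toSignedMeasure_apply_measurable (measurableSet_singleton 0)]
  have hintegral : ∫ x, P x ∂μ = μ.real {0} + ∫ x in Ioc 0 T, P x ∂μ :=
    calc ∫ x, P x ∂μ = ∫ x in Iic T, P x ∂μ := by rw [hμ]
      _ = _ := by
          rw [hIic, setIntegral_union hdisj measurableSet_Ioc
            (hint.mono_set (singleton_subset_iff.2 ⟨le_rfl, zero_le⟩))
            (hint.mono_set Ioc_subset_Icc_self), integral_singleton, hP0, smul_eq_mul, mul_one]
  rw [hprice, hintegral, price_restrict_Ioc_zero_eq_setIntegral hP havg hT]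

end AdditivePrice

theorem choquet_time_bounded_general (r : SignedMeasure ℝ≥0 → SignedMeasure ℝ≥0 → Prop)
    (hM : IsMarket r) (hNA : NoArb r)
    (π : SignedMeasure ℝ≥0 → ℝ)
    (hπ : ∀ γ : SignedMeasure ℝ≥0, r γ (π γ • uzcb 0))
    (P : ℝ≥0 → ℝ) (hP : ∀ t, P t = π (uzcb t))
    (hPcont : Continuous P)
    (havg : ∀ γ : SignedMeasure ℝ≥0, 0 ≤ γ → ∀ s t : ℝ≥0, s < t →
      ∃ b : ℝ, sInf (P '' Set.Icc s t) ≤ b ∧ b ≤ sSup (P '' Set.Icc s t) ∧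
        π (γ.restrict (Set.Ioc s t)) = b * γ (Set.Ioc s t)) :
    ∀ T : ℝ≥0, 0 < T → ∀ γ : SignedMeasure ℝ≥0,
      γ.toJordanDecomposition.posPart (Set.Ioi T) = 0 →
      γ.toJordanDecomposition.negPart (Set.Ioi T) = 0 →
      π γ = sInt P γ := by
  intro T hT γ hpos hneg
  let price : SignedMeasure ℝ≥0 →+ ℝ := AddMonoidHom.mk' π (price_add hM hNA hπ)
  have hsmul : ∀ c, price (c • uzcb 0) = c := price_smul_uzcb_zero hM hNA hπ
  have hP0 : P 0 = 1 := by simpa [hP] using price_smul_uzcb_zero hM hNA hπ 1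
  have hprice (μ : Measure ℝ≥0) [IsFiniteMeasure μ] (hμ : μ (Ioi T) = 0) :
      price μ.toSignedMeasure = ∫ x, P x ∂μ :=
    price_eq_integral_of_measure_Ioi_eq_zero hsmul hP0 hPcont
      (havg _ μ.toSignedMeasure_nonneg) hT hμ
  calc π γ = price (γ.toJordanDecomposition.posPart.toSignedMeasure -
        γ.toJordanDecomposition.negPart.toSignedMeasure) :=
        congrArg π γ.toSignedMeasure_toJordanDecomposition.symm
    _ = sInt P γ := by rw [map_sub, hprice _ hpos, hprice _ hneg, sInt]

/-- Choquet formula for time-bounded cash flows. Under NA, continuity /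
boundedness / strict positivity of the UZCB prices (A1) and the average value requirement
(A2), every cash flow whose total variation is supported in [0,T] has NA price
∫₀^∞ P_t dγ(t). -/
theorem choquet_time_bounded (r : SignedMeasure ℝ≥0 → SignedMeasure ℝ≥0 → Prop)
    (hM : IsMarket r) (hNA : NoArb r)
    (π : SignedMeasure ℝ≥0 → ℝ)
    (hπ : ∀ γ : SignedMeasure ℝ≥0, r γ (π γ • uzcb 0))
    (P : ℝ≥0 → ℝ) (hP : ∀ t, P t = π (uzcb t))
    (hPcont : Continuous P) (hPbdd : ∃ M : ℝ, ∀ t, P t ≤ M) (hPpos : ∀ t, 0 < P t)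
    (havg : ∀ γ : SignedMeasure ℝ≥0, 0 ≤ γ → ∀ s t : ℝ≥0, s < t →
      ∃ b : ℝ, sInf (P '' Set.Icc s t) ≤ b ∧ b ≤ sSup (P '' Set.Icc s t) ∧
        π (γ.restrict (Set.Ioc s t)) = b * γ (Set.Ioc s t)) :
    ∀ T : ℝ≥0, 0 < T → ∀ γ : SignedMeasure ℝ≥0,
      γ.toJordanDecomposition.posPart (Set.Ioi T) = 0 →
      γ.toJordanDecomposition.negPart (Set.Ioi T) = 0 →
      π γ = sInt P γ :=
  choquet_time_bounded_general r hM hNA π hπ P hP hPcont havg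
end

section
/- Let f : [0,∞) → ℝ be continuous, bounded and strictly positive with f(0) = 1, define π'(γ) = ∫_0^∞ f(t) dγ(t) for γ ∈ M_b (via the Jordan decomposition), and define the relation ∼ on M_b by γ1 ∼ γ2 if and only if π'(γ1) = π'(γ2). Then (M_b, ∼) is a market of deterministic cash flows which is arbitrage-free; its uniquely determined NA price is π = π', with unit zero-coupon bond prices P_t = f(t); and the relation satisfies: (A1) t ↦ P_t is continuous, bounded and strictly positive; (A2) for every γ ∈ M_b⁺ and 0 ≤ s < t there exists b with min{P_r : r ∈ [s,t]} ≤ b ≤ max{P_r : r ∈ [s,t]} and π(γ_{(s,t]}) = b·γ((s,t]); (A3) whenever β_k, γ_k ∈ M_b⁺ with β_k ∼ γ_k for all k and both Σ_k β_k and Σ_k γ_k lie in M_b⁺, then Σ_k β_k ∼ Σ_k γ_k. -/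
open MeasureTheory
open scoped NNReal

/-- `γ` is the (setwise) sum of the sequence of signed measures `f`. -/
def IsSumOf (γ : SignedMeasure ℝ≥0) (f : ℕ → SignedMeasure ℝ≥0) : Prop :=
  ∀ A : Set ℝ≥0, MeasurableSet A → HasSum (fun k => f k A) (γ A)

/-!
The functional `π' γ = ∫ f dγ` is additive, maps `b • δ₀` to `b * f 0 = b`, and is strictly
positive on nonzero nonnegative measures because `f > 0`; these three facts alone make
"equal price" an arbitrage-free market with price `π'`, and `P_t = ∫ f dδ_t = f t`.
A nonnegative signed measure is the signed measure of a finite measure `μ`, so (A2) says that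
`∫_{(s,t]} f dμ` is `μ (s,t]` times a value between the extrema of `f` on `[s,t]`, and (A3)
holds because the setwise sum of the `β k` is the measure sum of the corresponding measures,
against which the integral of a bounded function is countably additive.
-/

open scoped BoundedContinuousFunction

theorem MeasureTheory.SignedMeasure.exists_toSignedMeasure_eq_of_nonneg {α : Type*}
    [MeasurableSpace α] {γ : SignedMeasure α} (h : 0 ≤ γ) :
    ∃ (μ : Measure α) (_ : IsFiniteMeasure μ), μ.toSignedMeasure = γ :=
  have hγ : 0 ≤[Set.univ] γ := (VectorMeasure.le_restrict_univ_iff_le _ _).2 h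
  ⟨γ.toMeasureOfZeroLE Set.univ MeasurableSet.univ hγ, inferInstance,
    γ.toMeasureOfZeroLE_toSignedMeasure hγ⟩

theorem MeasureTheory.Measure.eq_sum_of_hasSum_measureReal {α : Type*} [MeasurableSpace α]
    {μ : Measure α} [IsFiniteMeasure μ] {μs : ℕ → Measure α} [∀ k, IsFiniteMeasure (μs k)]
    (h : ∀ A, MeasurableSet A → HasSum (fun k => (μs k).real A) (μ.real A)) :
    μ = Measure.sum μs := by
  refine Measure.ext fun A hA => ?_
  rw [Measure.sum_apply _ hA, ← ofReal_measureReal, ← (h A hA).tsum_eq,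
    ENNReal.ofReal_tsum_of_nonneg (fun _ => measureReal_nonneg) (h A hA).summable]
  exact tsum_congr fun k => ofReal_measureReal

theorem MeasureTheory.exists_setIntegral_eq_mul_measureReal {α : Type*} [MeasurableSpace α]
    (μ : Measure α) [IsFiniteMeasure μ] {f : α → ℝ} {A : Set α} (hA : MeasurableSet A)
    (hf : IntegrableOn f A μ) {m M : ℝ} (hmM : m ≤ M) (hfA : ∀ x ∈ A, f x ∈ Set.Icc m M) :
    ∃ b ∈ Set.Icc m M, ∫ x in A, f x ∂μ = b * μ.real A := by
  rcases eq_or_lt_of_le (measureReal_nonneg (μ := μ) (s := A)) with hA0 | hApos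
  · refine ⟨m, ⟨le_rfl, hmM⟩, ?_⟩
    rw [← hA0, mul_zero, Measure.restrict_eq_zero.2 ((measureReal_eq_zero_iff).1 hA0.symm),
      integral_zero_measure]
  have hlow : m * μ.real A ≤ ∫ x in A, f x ∂μ :=
    setIntegral_ge_of_const_le_real hA (measure_ne_top _ _) (fun x hx => (hfA x hx).1) hf
  have hup : ∫ x in A, f x ∂μ ≤ M * μ.real A := by
    rw [mul_comm, ← smul_eq_mul, ← setIntegral_const]
    exact setIntegral_mono_on hf (integrableOn_const (measure_ne_top _ _)) hA
      fun x hx => (hfA x hx).2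
  exact ⟨(∫ x in A, f x ∂μ) / μ.real A, ⟨(le_div_iff₀ hApos).2 hlow, (div_le_iff₀ hApos).2 hup⟩,
    (div_mul_cancel₀ _ hApos.ne').symm⟩

section sInt

variable (f : ℝ≥0 →ᵇ ℝ)

theorem sInt_toSignedMeasure_sub (μ ν : Measure ℝ≥0) [IsFiniteMeasure μ] [IsFiniteMeasure ν] :
    sInt f (μ.toSignedMeasure - ν.toSignedMeasure) = (∫ t, f t ∂μ) - ∫ t, f t ∂ν := by
  set γ := μ.toSignedMeasure - ν.toSignedMeasure
  set p := γ.toJordanDecomposition.posPart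
  set n := γ.toJordanDecomposition.negPart
  -- `(p, n)` need not be `(μ, ν)`, but both pairs have the same difference.
  have hpn : p + ν = μ + n := by
    rw [← Measure.toSignedMeasure_eq_toSignedMeasure_iff, Measure.toSignedMeasure_add,
      Measure.toSignedMeasure_add, ← sub_eq_sub_iff_add_eq_add]
    exact γ.toSignedMeasure_toJordanDecomposition
  have h := congrArg (fun κ : Measure ℝ≥0 => ∫ t, f t ∂κ) hpn
  simp only [integral_add_measure (f.integrable _) (f.integrable _)] at h
  simp only [sInt]
  linarith

theorem sInt_toSignedMeasure (μ : Measure ℝ≥0) [IsFiniteMeasure μ] :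
    sInt f μ.toSignedMeasure = ∫ t, f t ∂μ := by
  simpa using sInt_toSignedMeasure_sub f μ 0

theorem sInt_zero : sInt f 0 = 0 := by
  simpa using sInt_toSignedMeasure f 0

theorem sInt_add (γ₁ γ₂ : SignedMeasure ℝ≥0) : sInt f (γ₁ + γ₂) = sInt f γ₁ + sInt f γ₂ := by
  set j₁ := γ₁.toJordanDecomposition
  set j₂ := γ₂.toJordanDecomposition
  have h : γ₁ + γ₂ = (j₁.posPart + j₂.posPart).toSignedMeasure -
      (j₁.negPart + j₂.negPart).toSignedMeasure := by
    conv_lhs => rw [← γ₁.toSignedMeasure_toJordanDecomposition,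
      ← γ₂.toSignedMeasure_toJordanDecomposition]
    simp only [JordanDecomposition.toSignedMeasure, Measure.toSignedMeasure_add]
    abel
  rw [h, sInt_toSignedMeasure_sub, integral_add_measure (f.integrable _) (f.integrable _),
    integral_add_measure (f.integrable _) (f.integrable _)]
  simp only [sInt]
  ring

theorem sInt_smul_toSignedMeasure (c : ℝ) (μ : Measure ℝ≥0) [IsFiniteMeasure μ] :
    sInt f (c • μ.toSignedMeasure) = c * ∫ t, f t ∂μ := by
  have h : c • μ.toSignedMeasure =
      (c.toNNReal • μ).toSignedMeasure - ((-c).toNNReal • μ).toSignedMeasure := by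
    ext i hi
    simp only [smul_apply, sub_apply, Measure.toSignedMeasure_apply_measurable hi,
      measureReal_nnreal_smul_apply, smul_eq_mul, ← sub_mul, Real.coe_toNNReal',
      max_zero_sub_max_neg_zero_eq_self]
  rw [h, sInt_toSignedMeasure_sub, integral_smul_nnreal_measure, integral_smul_nnreal_measure,
    NNReal.smul_def, NNReal.smul_def, smul_eq_mul, smul_eq_mul, ← sub_mul, Real.coe_toNNReal',
    Real.coe_toNNReal', max_zero_sub_max_neg_zero_eq_self]

theorem sInt_uzcb (t : ℝ≥0) : sInt f (uzcb t) = f t := by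
  rw [uzcb, sInt_toSignedMeasure, integral_dirac]

theorem sInt_smul_uzcb (b : ℝ) (t : ℝ≥0) : sInt f (b • uzcb t) = b * f t := by
  rw [uzcb, sInt_smul_toSignedMeasure, integral_dirac]

theorem sInt_pos {γ : SignedMeasure ℝ≥0} (hf : ∀ t, 0 < f t) (hγ : 0 ≤ γ) (hγ0 : γ ≠ 0) :
    0 < sInt f γ := by
  obtain ⟨μ, _, rfl⟩ := SignedMeasure.exists_toSignedMeasure_eq_of_nonneg hγ
  have hμ : μ ≠ 0 := by rintro rfl; exact hγ0 Measure.toSignedMeasure_zero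
  rw [sInt_toSignedMeasure,
    integral_pos_iff_support_of_nonneg (fun t => (hf t).le) (f.integrable _),
    Function.support_eq_univ fun t => (hf t).ne']
  exact Measure.measure_univ_pos.2 hμ

theorem exists_sInt_restrict_eq_mul {γ : SignedMeasure ℝ≥0} (hγ : 0 ≤ γ) {A : Set ℝ≥0}
    (hA : MeasurableSet A) {m M : ℝ} (hmM : m ≤ M) (hfA : ∀ x ∈ A, f x ∈ Set.Icc m M) :
    ∃ b ∈ Set.Icc m M, sInt f (γ.restrict A) = b * γ A := by
  obtain ⟨μ, _, rfl⟩ := SignedMeasure.exists_toSignedMeasure_eq_of_nonneg hγ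
  rw [Measure.toSignedMeasure_restrict_eq_restrict_toSignedMeasure _ _ hA, sInt_toSignedMeasure,
    Measure.toSignedMeasure_apply_measurable hA]
  exact exists_setIntegral_eq_mul_measureReal μ hA (f.integrable _).integrableOn hmM hfA

theorem exists_sInt_restrict_Ioc_eq_mul {γ : SignedMeasure ℝ≥0} (hγ : 0 ≤ γ) {s t : ℝ≥0}
    (hst : s ≤ t) :
    ∃ b ∈ Set.Icc (sInf (f '' Set.Icc s t)) (sSup (f '' Set.Icc s t)),
      sInt f (γ.restrict (Set.Ioc s t)) = b * γ (Set.Ioc s t) := by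
  have hK : IsCompact (f '' Set.Icc s t) := isCompact_Icc.image f.continuous
  have hne : (f '' Set.Icc s t).Nonempty := (Set.nonempty_Icc.2 hst).image f
  refine exists_sInt_restrict_eq_mul f hγ measurableSet_Ioc
    (csInf_le_csSup hne hK.bddBelow hK.bddAbove) fun x hx => ?_
  have hx' := Set.mem_image_of_mem f (Set.Ioc_subset_Icc_self hx)
  exact ⟨csInf_le hK.bddBelow hx', le_csSup hK.bddAbove hx'⟩

theorem sInt_eq_tsum_of_isSumOf {B : SignedMeasure ℝ≥0} {β : ℕ → SignedMeasure ℝ≥0}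
    (hB : 0 ≤ B) (hβ : ∀ k, 0 ≤ β k) (hsum : IsSumOf B β) :
    sInt f B = ∑' k, sInt f (β k) := by
  obtain ⟨μ, _, rfl⟩ := SignedMeasure.exists_toSignedMeasure_eq_of_nonneg hB
  choose μs hμs hβμ using fun k => SignedMeasure.exists_toSignedMeasure_eq_of_nonneg (hβ k)
  have hμ : μ = Measure.sum μs := Measure.eq_sum_of_hasSum_measureReal fun A hA => by
    simpa only [← hβμ, Measure.toSignedMeasure_apply_measurable hA] using hsum A hA
  simp only [← hβμ, sInt_toSignedMeasure]
  rw [← integral_sum_measure (hμ ▸ f.integrable μ), ← hμ]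

end sInt

section Market

variable (π : SignedMeasure ℝ≥0 → ℝ)

theorem isMarket_of_price (hadd : ∀ γ₁ γ₂, π (γ₁ + γ₂) = π γ₁ + π γ₂)
    (hunit : ∀ b : ℝ, π (b • uzcb 0) = b) (hpos : ∀ γ, 0 ≤ γ → γ ≠ 0 → 0 < π γ) :
    IsMarket fun γ₁ γ₂ => π γ₁ = π γ₂ :=
  ⟨fun _ => rfl, fun _ _ => Eq.symm, fun γ₁ γ₂ γ₃ γ₄ (h₁₂ : π γ₁ = π γ₂) (h₃₄ : π γ₃ = π γ₄) =>
    show π _ = π _ by rw [hadd, hadd, h₁₂, h₃₄],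
    fun γ hγ hγ0 => ⟨π γ, hpos γ hγ hγ0, (hunit _).symm⟩⟩

theorem noArb_of_price (hzero : π 0 = 0) (hpos : ∀ γ, 0 ≤ γ → γ ≠ 0 → 0 < π γ) :
    NoArb fun γ₁ γ₂ => π γ₁ = π γ₂ := by
  rintro ⟨γ, hγ, hγ0, h⟩
  exact (hpos γ hγ hγ0).ne' (h.symm.trans hzero)

end Market

/-- Existence of NA markets. Given a continuous, bounded, strictly positive
f with f(0) = 1, the relation γ₁ ∼ γ₂ ⇔ ∫ f dγ₁ = ∫ f dγ₂ defines an arbitrage-free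
market whose uniquely determined NA price is π' = ∫ f d·, with UZCB prices P_t = f(t),
and Assumptions (A1), (A2), (A3) hold. -/
theorem existence_of_NA_markets (f : ℝ≥0 → ℝ)
    (hfcont : Continuous f) (hfbdd : ∃ M : ℝ, ∀ t, f t ≤ M) (hfpos : ∀ t, 0 < f t)
    (hf0 : f 0 = 1)
    (r : SignedMeasure ℝ≥0 → SignedMeasure ℝ≥0 → Prop)
    (hr : ∀ γ₁ γ₂ : SignedMeasure ℝ≥0, r γ₁ γ₂ ↔ sInt f γ₁ = sInt f γ₂) :
    IsMarket r ∧ NoArb r ∧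
    -- the uniquely determined NA price is π = sInt f :
    (∀ γ : SignedMeasure ℝ≥0, r γ (sInt f γ • uzcb 0)) ∧
    (∀ g : SignedMeasure ℝ≥0 → ℝ, (∀ γ : SignedMeasure ℝ≥0, r γ (g γ • uzcb 0)) →
      g = fun γ => sInt f γ) ∧
    -- the UZCB prices are P_t = f(t) :
    (∀ t : ℝ≥0, sInt f (uzcb t) = f t) ∧
    -- (A1) P is continuous, bounded, strictly positive :
    Continuous (fun t => sInt f (uzcb t)) ∧
    (∃ M : ℝ, ∀ t : ℝ≥0, sInt f (uzcb t) ≤ M) ∧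
    (∀ t : ℝ≥0, 0 < sInt f (uzcb t)) ∧
    -- (A2) the average value requirement :
    (∀ γ : SignedMeasure ℝ≥0, 0 ≤ γ → ∀ s t : ℝ≥0, s < t →
      ∃ b : ℝ, sInf ((fun u => sInt f (uzcb u)) '' Set.Icc s t) ≤ b ∧
        b ≤ sSup ((fun u => sInt f (uzcb u)) '' Set.Icc s t) ∧
        sInt f (γ.restrict (Set.Ioc s t)) = b * γ (Set.Ioc s t)) ∧
    -- (A3) σ-additivity of the relation :
    (∀ β γ : ℕ → SignedMeasure ℝ≥0, (∀ k, 0 ≤ β k) → (∀ k, 0 ≤ γ k) →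
      (∀ k, r (β k) (γ k)) → ∀ B G : SignedMeasure ℝ≥0, 0 ≤ B → 0 ≤ G →
      IsSumOf B β → IsSumOf G γ → r B G) := by
  obtain ⟨M, hM⟩ := hfbdd
  obtain ⟨g, rfl⟩ : ∃ g : ℝ≥0 →ᵇ ℝ, ⇑g = f :=
    ⟨.ofNormedAddCommGroup f hfcont M fun t => (Real.norm_of_nonneg (hfpos t).le).trans_le (hM t),
      rfl⟩
  obtain rfl : r = fun γ₁ γ₂ => sInt g γ₁ = sInt g γ₂ := funext₂ fun γ₁ γ₂ => propext (hr γ₁ γ₂)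
  have hunit (b : ℝ) : sInt g (b • uzcb 0) = b := by rw [sInt_smul_uzcb, hf0, mul_one]
  have hpos (γ : SignedMeasure ℝ≥0) : 0 ≤ γ → γ ≠ 0 → 0 < sInt g γ := sInt_pos g hfpos
  refine ⟨isMarket_of_price _ (sInt_add g) hunit hpos, noArb_of_price _ (sInt_zero g) hpos,
    fun γ => (hunit _).symm, fun π hπ => funext fun γ => by rw [hπ γ, hunit], sInt_uzcb g, ?_⟩
  simp only [sInt_uzcb]
  refine ⟨hfcont, ⟨M, hM⟩, hfpos, ?_, ?_⟩
  · intro γ hγ s t hst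
    obtain ⟨b, hb, h⟩ := exists_sInt_restrict_Ioc_eq_mul g hγ hst.le
    exact ⟨b, hb.1, hb.2, h⟩
  · intro β γ hβ hγ hβγ B G hB hG hsB hsG
    rw [sInt_eq_tsum_of_isSumOf g hB hβ hsB, sInt_eq_tsum_of_isSumOf g hG hγ hsG]
    exact tsum_congr hβγ
end
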